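/- Let R > 1 and α ∈ (0, 1/2). With γ = 1 - 2α, h_n = R^{-nγ}/√n, and n_δ = ⌈|ln δ|/(2 ln R)⌉, there exist constants c₁, C₁ > 0 such that for all small δ ∈ (0,1): c₁ δ^{-2α} ≤ Σ_{n=1}^∞ n|h_n|² / (4R^{-2n} + δ²(R^n - R^{-n})²) ≤ C₁ δ^{-2α}. -/
import Mathlib

noncomputable def hcoef (R γ : ℝ) (n : ℕ) : ℝ := R ^ (-(n:ℝ) * γ) / Real.sqrt n

open Real Finset

noncomputable def fterm (R α δ : ℝ) (n : ℕ) : ℝ :=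
  ((n:ℝ) + 1) * |hcoef R (1 - 2*α) (n+1)| ^ 2 /
    (4 * R⁻¹ ^ (2 * (n+1)) + δ ^ 2 * (R ^ (n+1) - R⁻¹ ^ (n+1)) ^ 2)

lemma pow_eq_rpow {R : ℝ} (hR0 : 0 < R) (k : ℕ) : (R⁻¹)^k = R ^ (-(k:ℝ)) := by
  rw [Real.rpow_neg hR0.le, inv_pow, Real.rpow_natCast]

lemma rpow_nat_mul {R : ℝ} (hR0 : 0 < R) (a : ℝ) (k : ℕ) : (R ^ a) ^ k = R ^ (a * k) := by
  rw [Real.rpow_mul hR0.le, Real.rpow_natCast]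

lemma fterm_eq {R : ℝ} (α δ : ℝ) (hR0 : 0 < R) (n : ℕ) :
    fterm R α δ n = R ^ (-(2*(1 - 2*α))*((n:ℝ)+1)) /
      (4 * R ^ (-(2*((n:ℝ)+1))) + δ^2 * (R ^ ((n:ℝ)+1) - R ^ (-((n:ℝ)+1)))^2) := by
  have hm : (0:ℝ) < (n:ℝ) + 1 := by positivity
  have h1 : |hcoef R (1 - 2*α) (n+1)| = R ^ (-(((n:ℝ)+1)) * (1 - 2*α)) / Real.sqrt ((n:ℝ)+1) := by
    rw [hcoef]
    push_cast
    rw [abs_of_nonneg]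
    positivity
  have h2 : ((n:ℝ) + 1) * |hcoef R (1 - 2*α) (n+1)| ^ 2 = R ^ (-(2*(1 - 2*α))*((n:ℝ)+1)) := by
    rw [h1, div_pow, Real.sq_sqrt hm.le, sq, ← Real.rpow_add hR0]
    field_simp
    ring_nf
  rw [fterm, h2, pow_eq_rpow hR0, pow_eq_rpow hR0, show R ^ (n+1) = R ^ (((n+1 : ℕ)):ℝ) from (Real.rpow_natCast R (n+1)).symm]
  push_cast
  ring_nf

section bounds
variable {R α δ : ℝ}

lemma den_pos (hR : 1 < R) (δ : ℝ) (n : ℕ) :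
    0 < 4 * R ^ (-(2*((n:ℝ)+1))) + δ^2 * (R ^ ((n:ℝ)+1) - R ^ (-((n:ℝ)+1)))^2 := by
  have hR0 : (0:ℝ) < R := one_pos.trans hR
  have := Real.rpow_pos_of_pos hR0 (-(2*((n:ℝ)+1)))
  positivity

lemma fterm_nonneg (hR : 1 < R) (n : ℕ) : 0 ≤ fterm R α δ n := by
  have hR0 : (0:ℝ) < R := one_pos.trans hR
  rw [fterm_eq α δ hR0]
  exact div_nonneg (Real.rpow_pos_of_pos hR0 _).le (den_pos hR δ n).le

lemma fterm_le_one (hR : 1 < R) (n : ℕ) : fterm R α δ n ≤ (R ^ (4*α)) ^ (n+1) / 4 := by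
  have hR0 : (0:ℝ) < R := one_pos.trans hR
  rw [fterm_eq α δ hR0, rpow_nat_mul hR0]
  push_cast
  have h1 : (0:ℝ) < 4 * R ^ (-(2*((n:ℝ)+1))) := by
    have := Real.rpow_pos_of_pos hR0 (-(2*((n:ℝ)+1))); positivity
  have hrest : (0:ℝ) ≤ δ^2 * (R ^ ((n:ℝ)+1) - R ^ (-((n:ℝ)+1)))^2 := by positivity
  calc R ^ (-(2*(1 - 2*α))*((n:ℝ)+1)) /
        (4 * R ^ (-(2*((n:ℝ)+1))) + δ^2 * (R ^ ((n:ℝ)+1) - R ^ (-((n:ℝ)+1)))^2)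
      ≤ R ^ (-(2*(1 - 2*α))*((n:ℝ)+1)) / (4 * R ^ (-(2*((n:ℝ)+1)))) :=
        div_le_div_of_nonneg_left (Real.rpow_pos_of_pos hR0 _).le h1 (by linarith)
    _ = R ^ (4*α*((n:ℝ)+1)) / 4 := by
        have hne : R ^ (2*((n:ℝ)+1)) ≠ 0 := (Real.rpow_pos_of_pos hR0 _).ne'
        rw [Real.rpow_neg hR0.le (2*((n:ℝ)+1)), div_eq_div_iff (by positivity) (by norm_num : (4:ℝ) ≠ 0),
          show R ^ (4*α*((n:ℝ)+1)) = R ^ (-(2*(1 - 2*α))*((n:ℝ)+1)) * R ^ (2*((n:ℝ)+1)) from by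
            rw [← Real.rpow_add hR0]; congr 1; ring]
        field_simp

lemma fterm_le_two (hR : 1 < R) (hδ0 : 0 < δ) (n : ℕ) :
    fterm R α δ n ≤ (δ^2)⁻¹ * ((1 - R^(-2:ℝ))^2)⁻¹ * (R ^ (-(2+2*(1 - 2*α)))) ^ (n+1) := by
  have hR0 : (0:ℝ) < R := one_pos.trans hR
  have hm1 : (1:ℝ) ≤ (n:ℝ) + 1 := by
    have : (0:ℝ) ≤ (n:ℝ) := Nat.cast_nonneg n
    linarith
  have hs1 : R ^ (-2:ℝ) < 1 := Real.rpow_lt_one_of_one_lt_of_neg hR (by norm_num : (-2:ℝ) < 0)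
  have hs0 : (0:ℝ) < R ^ (-2:ℝ) := Real.rpow_pos_of_pos hR0 _
  rw [fterm_eq α δ hR0, rpow_nat_mul hR0]
  push_cast
  have key : δ^2 * (1 - R^(-2:ℝ))^2 * R ^ (2*((n:ℝ)+1))
      ≤ 4 * R ^ (-(2*((n:ℝ)+1))) + δ^2 * (R ^ ((n:ℝ)+1) - R ^ (-((n:ℝ)+1)))^2 := by
    have hbr : R ^ ((n:ℝ)+1) * (1 - R^(-2:ℝ)) ≤ R ^ ((n:ℝ)+1) - R ^ (-((n:ℝ)+1)) := by
      have e1 : R ^ ((n:ℝ)+1) * (1 - R^(-2:ℝ)) = R ^ ((n:ℝ)+1) - R ^ (((n:ℝ)+1) + (-2)) := by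
        rw [show R ^ (((n:ℝ)+1) + (-2:ℝ)) = R ^ ((n:ℝ)+1) * R ^ (-2:ℝ) from Real.rpow_add hR0 _ _,
          mul_one_sub]
      rw [e1]
      have : R ^ (-((n:ℝ)+1)) ≤ R ^ (((n:ℝ)+1) + (-2)) :=
        Real.rpow_le_rpow_of_exponent_le hR.le (by linarith)
      linarith
    have hbr0 : 0 ≤ R ^ ((n:ℝ)+1) * (1 - R^(-2:ℝ)) := by
      have := (Real.rpow_pos_of_pos hR0 ((n:ℝ)+1)).le
      nlinarith
    have hsq : (R ^ ((n:ℝ)+1) * (1 - R^(-2:ℝ)))^2 ≤ (R ^ ((n:ℝ)+1) - R ^ (-((n:ℝ)+1)))^2 :=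
      pow_le_pow_left₀ hbr0 hbr 2
    have hexp : (R ^ ((n:ℝ)+1))^2 = R ^ (2*((n:ℝ)+1)) := by
      rw [sq, ← Real.rpow_add hR0]; congr 1; ring
    have e2 : δ^2 * (R ^ ((n:ℝ)+1) * (1 - R^(-2:ℝ)))^2
        = δ^2 * (1 - R^(-2:ℝ))^2 * R ^ (2*((n:ℝ)+1)) := by
      rw [mul_pow, hexp]; ring
    have h4 : (0:ℝ) ≤ 4 * R ^ (-(2*((n:ℝ)+1))) := by positivity
    have h5 := mul_le_mul_of_nonneg_left hsq (sq_nonneg δ)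
    linarith
  have hden2 : (0:ℝ) < δ^2 * (1 - R^(-2:ℝ))^2 * R ^ (2*((n:ℝ)+1)) := by
    have h1 : (0:ℝ) < 1 - R^(-2:ℝ) := by linarith
    have := Real.rpow_pos_of_pos hR0 (2*((n:ℝ)+1))
    positivity
  calc R ^ (-(2*(1 - 2*α))*((n:ℝ)+1)) /
        (4 * R ^ (-(2*((n:ℝ)+1))) + δ^2 * (R ^ ((n:ℝ)+1) - R ^ (-((n:ℝ)+1)))^2)
      ≤ R ^ (-(2*(1 - 2*α))*((n:ℝ)+1)) / (δ^2 * (1 - R^(-2:ℝ))^2 * R ^ (2*((n:ℝ)+1))) :=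
        div_le_div_of_nonneg_left (Real.rpow_pos_of_pos hR0 _).le hden2 key
    _ = (δ^2)⁻¹ * ((1 - R^(-2:ℝ))^2)⁻¹ * R ^ (-(2+2*(1 - 2*α))*((n:ℝ)+1)) := by
        have he : R ^ (-(2+2*(1 - 2*α))*((n:ℝ)+1))
            = R ^ (-(2*(1 - 2*α))*((n:ℝ)+1)) * (R ^ (2*((n:ℝ)+1)))⁻¹ := by
          rw [← Real.rpow_neg hR0.le, ← Real.rpow_add hR0]; congr 1; ring
        rw [he]
        have hne1 : R ^ (2*((n:ℝ)+1)) ≠ 0 := (Real.rpow_pos_of_pos hR0 _).ne'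
        have hne2 : (1 - R^(-2:ℝ)) ≠ 0 := by intro h; nlinarith
        field_simp
        try ring

end bounds

theorem stmt_18 (R α : ℝ) (hR : 1 < R) (hα : 0 < α) (hα2 : α < 1/2) :
    ∃ c₁ C₁ : ℝ, 0 < c₁ ∧ 0 < C₁ ∧ ∃ δ₀ : ℝ, 0 < δ₀ ∧ δ₀ ≤ 1 ∧
      ∀ δ : ℝ, 0 < δ → δ < δ₀ →
        c₁ * δ ^ (-2 * α) ≤
          (∑' n : ℕ, ((n:ℝ) + 1) * |hcoef R (1 - 2*α) (n+1)| ^ 2 /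
            (4 * R⁻¹ ^ (2 * (n+1)) + δ ^ 2 * (R ^ (n+1) - R⁻¹ ^ (n+1)) ^ 2)) ∧
        (∑' n : ℕ, ((n:ℝ) + 1) * |hcoef R (1 - 2*α) (n+1)| ^ 2 /
            (4 * R⁻¹ ^ (2 * (n+1)) + δ ^ 2 * (R ^ (n+1) - R⁻¹ ^ (n+1)) ^ 2)) ≤
          C₁ * δ ^ (-2 * α) := by
  have hR0 : (0:ℝ) < R := one_pos.trans hR
  have hγ0 : (0:ℝ) < 1 - 2*α := by linarith
  set s : ℝ := R ^ (-2:ℝ) with hsdef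
  have hs0 : 0 < s := Real.rpow_pos_of_pos hR0 _
  have hs1 : s < 1 := Real.rpow_lt_one_of_one_lt_of_neg hR (by norm_num)
  set x : ℝ := R ^ (4*α) with hxdef
  have hx1 : 1 < x := by
    rw [hxdef]
    exact Real.one_lt_rpow_iff_of_pos hR0 |>.mpr (Or.inl ⟨hR, by linarith⟩)
  set q : ℝ := R ^ (-(2+2*(1 - 2*α))) with hqdef
  have hq0 : 0 < q := Real.rpow_pos_of_pos hR0 _
  have hq1 : q < 1 := by
    rw [hqdef]
    exact Real.rpow_lt_one_of_one_lt_of_neg hR (by linarith)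
  set K : ℝ := ((1 - s)^2)⁻¹ with hKdef
  have hK0 : 0 < K := by
    have h1 : 0 < 1 - s := by linarith
    positivity
  have hsm : ∀ k : ℕ, s ^ k = R ^ (-(2*(k:ℝ))) := by
    intro k
    rw [hsdef, rpow_nat_mul hR0]; congr 1; ring
  refine ⟨s ^ (1-2*α) / (4 + s⁻¹), x^2/(4*(x-1)) + K*(1-q)⁻¹, ?_, ?_, 1, one_pos, le_refl 1, ?_⟩
  · have h1 : 0 < s ^ ((1-2*α):ℝ) := Real.rpow_pos_of_pos hs0 _
    have h2 : (0:ℝ) < 4 + s⁻¹ := by positivity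
    positivity
  · have h1 : (0:ℝ) < x - 1 := by linarith
    have h2 : (0:ℝ) < 1 - q := by linarith
    positivity
  intro δ hδ0 hδ1
  -- choose N
  have hex : ∃ n : ℕ, s ^ (n+1) ≤ δ := by
    obtain ⟨k, hk⟩ := exists_pow_lt_of_lt_one hδ0 hs1
    exact ⟨k, le_trans (pow_le_pow_of_le_one hs0.le hs1.le (Nat.le_succ k)) hk.le⟩
  set N := Nat.find hex with hNdef
  have hN1 : s ^ (N+1) ≤ δ := Nat.find_spec hex
  have hN2 : δ < s ^ N := by
    rcases Nat.eq_zero_or_pos N with h | h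
    · rw [h, pow_zero]; exact hδ1
    · obtain ⟨k, hk⟩ := Nat.exists_eq_succ_of_ne_zero h.ne'
      have hmin := Nat.find_min hex (show k < N by omega)
      push_neg at hmin
      rw [hk]
      exact hmin
  have hsum : Summable (fterm R α δ) := by
    have h1 : Summable (fun n : ℕ => ((δ^2)⁻¹ * ((1 - R^(-2:ℝ))^2)⁻¹ * (R ^ (-(2+2*(1 - 2*α))))) * (R ^ (-(2+2*(1 - 2*α))))^n) := by
      refine Summable.mul_left _ ?_
      rw [← hqdef]
      exact summable_geometric_of_lt_one hq0.le hq1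
    have h2 : Summable (fun n : ℕ => (δ^2)⁻¹ * ((1 - R^(-2:ℝ))^2)⁻¹ * (R ^ (-(2+2*(1 - 2*α))))^(n+1)) :=
      h1.congr (fun n => by rw [pow_succ]; ring)
    exact Summable.of_nonneg_of_le (fun n => fterm_nonneg hR n) (fun n => fterm_le_two hR hδ0 n) h2
  -- lower bound
  have hlow : (s ^ (1-2*α) / (4 + s⁻¹)) * δ ^ (-2 * α) ≤ fterm R α δ N := by
    rw [fterm_eq α δ hR0]
    have e1 : R ^ (-(2*((N:ℝ)+1))) = s^(N+1) := by
      rw [hsm (N+1)]; congr 1; push_cast; ring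
    have e2 : R ^ (2*((N:ℝ)+1)) = (s^(N+1))⁻¹ := by
      rw [← e1, Real.rpow_neg hR0.le, inv_inv]
    have hsN : s*δ < s^(N+1) := by
      have := mul_lt_mul_of_pos_left hN2 hs0
      calc s*δ < s * s^N := this
        _ = s^(N+1) := by rw [pow_succ]; ring
    have hnn : (0:ℝ) ≤ (N:ℝ) := Nat.cast_nonneg N
    have h0m : R ^ (-((N:ℝ)+1)) ≤ R ^ ((N:ℝ)+1) :=
      Real.rpow_le_rpow_of_exponent_le hR.le (by linarith)
    have hRm0 : (0:ℝ) < R ^ (-((N:ℝ)+1)) := Real.rpow_pos_of_pos hR0 _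
    have hexp : (R ^ ((N:ℝ)+1))^2 = R ^ (2*((N:ℝ)+1)) := by
      rw [sq, ← Real.rpow_add hR0]; congr 1; ring
    have hsq : (R ^ ((N:ℝ)+1) - R ^ (-((N:ℝ)+1)))^2 ≤ (s^(N+1))⁻¹ := by
      have h1 : (R ^ ((N:ℝ)+1) - R ^ (-((N:ℝ)+1)))^2 ≤ (R ^ ((N:ℝ)+1))^2 := by
        apply pow_le_pow_left₀ (by linarith) (by linarith) 2
      rw [hexp, e2] at h1
      exact h1
    have hden_le : 4 * R ^ (-(2*((N:ℝ)+1))) + δ^2 * (R ^ ((N:ℝ)+1) - R ^ (-((N:ℝ)+1)))^2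
        ≤ (4 + s⁻¹) * δ := by
      have b1 : 4 * R ^ (-(2*((N:ℝ)+1))) ≤ 4 * δ := by rw [e1]; linarith
      have b2 : δ^2 * (R ^ ((N:ℝ)+1) - R ^ (-((N:ℝ)+1)))^2 ≤ δ^2 * (s*δ)⁻¹ := by
        have i1 : (s^(N+1) : ℝ)⁻¹ ≤ (s*δ)⁻¹ := inv_anti₀ (by positivity) hsN.le
        have := mul_le_mul_of_nonneg_left (le_trans hsq i1) (sq_nonneg δ)
        linarith
      have b3 : δ^2 * (s*δ)⁻¹ = s⁻¹ * δ := by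
        field_simp
      rw [b3] at b2
      linarith
    have hnum_ge : s ^ ((1-2*α):ℝ) * δ ^ ((1-2*α):ℝ) ≤ R ^ (-(2*(1 - 2*α))*((N:ℝ)+1)) := by
      have en : R ^ (-(2*(1 - 2*α))*((N:ℝ)+1)) = ((s^(N+1) : ℝ)) ^ ((1-2*α):ℝ) := by
        rw [hsm (N+1), ← Real.rpow_mul hR0.le]; congr 1; push_cast; ring
      rw [en, ← Real.mul_rpow hs0.le hδ0.le]
      exact Real.rpow_le_rpow (by positivity) hsN.le hγ0.le
    have hstep : (s ^ ((1-2*α):ℝ) * δ ^ ((1-2*α):ℝ)) / ((4 + s⁻¹) * δ)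
        ≤ R ^ (-(2*(1 - 2*α))*((N:ℝ)+1)) /
          (4 * R ^ (-(2*((N:ℝ)+1))) + δ^2 * (R ^ ((N:ℝ)+1) - R ^ (-((N:ℝ)+1)))^2) :=
      div_le_div₀ (Real.rpow_pos_of_pos hR0 _).le hnum_ge (den_pos hR δ N) hden_le
    refine le_trans (le_of_eq ?_) hstep
    have e4 : δ ^ ((1-2*α):ℝ) / δ = δ ^ (-2 * α) := by
      have h5 : δ ^ (-2 * α) = δ ^ ((1-2*α):ℝ) * δ ^ (-1:ℝ) := by
        rw [← Real.rpow_add hδ0]; congr 1; ring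
      rw [h5, Real.rpow_neg_one, div_eq_mul_inv]
    rw [← e4]
    have h45 : (4:ℝ) + s⁻¹ ≠ 0 := by positivity
    field_simp
  have lower : (s ^ (1-2*α) / (4 + s⁻¹)) * δ ^ (-2 * α) ≤ ∑' n, fterm R α δ n :=
    le_trans hlow (Summable.le_tsum hsum N fun j _ => fterm_nonneg hR j)
  -- upper bound
  have hxN : x ^ N ≤ δ ^ (-2 * α) := by
    have h1 : ((s^N : ℝ)) ^ (-2 * α) ≤ δ ^ (-2 * α) :=
      Real.rpow_le_rpow_of_nonpos hδ0 hN2.le (by linarith)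
    have h2 : ((s^N : ℝ)) ^ (-2 * α) = x ^ N := by
      rw [hsm N, ← Real.rpow_mul hR0.le, hxdef, rpow_nat_mul hR0]; congr 1; ring
    linarith
  have hu1 : ∀ n : ℕ, fterm R α δ n ≤ x^(n+1)/4 := by
    intro n
    rw [hxdef]
    exact fterm_le_one hR n
  have hhead : ∑ n ∈ Finset.range (N+1), fterm R α δ n ≤ x^2/(4*(x-1)) * δ ^ (-2 * α) := by
    have hxpos : (0:ℝ) < x := by linarith
    have hx1' : (0:ℝ) < x - 1 := by linarith
    calc ∑ n ∈ Finset.range (N+1), fterm R α δ n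
        ≤ ∑ n ∈ Finset.range (N+1), x^(n+1)/4 := Finset.sum_le_sum fun n _ => hu1 n
      _ = ∑ n ∈ Finset.range (N+1), x^n * (x/4) :=
          Finset.sum_congr rfl fun n _ => by rw [pow_succ]; ring
      _ = (∑ n ∈ Finset.range (N+1), x^n) * (x/4) := (Finset.sum_mul _ _ _).symm
      _ = (x^(N+1) - 1)/(x-1) * (x/4) := by rw [geom_sum_eq hx1.ne' (N+1)]
      _ ≤ x^(N+1)/(x-1) * (x/4) := by
          have : (x^(N+1) - 1)/(x-1) ≤ x^(N+1)/(x-1) := by gcongr; linarith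
          have hx4 : (0:ℝ) ≤ x/4 := by positivity
          exact mul_le_mul_of_nonneg_right this hx4
      _ = x^N * (x^2/(4*(x-1))) := by
          rw [pow_succ]
          field_simp
      _ ≤ δ ^ (-2 * α) * (x^2/(4*(x-1))) := by
          have hc : (0:ℝ) ≤ x^2/(4*(x-1)) := by positivity
          exact mul_le_mul_of_nonneg_right hxN hc
      _ = x^2/(4*(x-1)) * δ ^ (-2 * α) := mul_comm _ _
  have hu2 : ∀ n : ℕ, fterm R α δ n ≤ (δ^2)⁻¹ * K * q^(n+1) := by
    intro n
    rw [hKdef, hsdef, hqdef]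
    exact fterm_le_two hR hδ0 n
  have hgsum : Summable (fun n : ℕ => ((δ^2)⁻¹*K*q^(N+2)) * q^n) :=
    (summable_geometric_of_lt_one hq0.le hq1).mul_left _
  have htail : (∑' n, fterm R α δ (n + (N+1))) ≤ ((δ^2)⁻¹*K*q^(N+2)) * (1-q)⁻¹ := by
    have hle : ∀ n : ℕ, fterm R α δ (n + (N+1)) ≤ ((δ^2)⁻¹*K*q^(N+2)) * q^n := by
      intro n
      calc fterm R α δ (n + (N+1)) ≤ (δ^2)⁻¹*K*q^(n+(N+1)+1) := hu2 _
        _ = ((δ^2)⁻¹*K*q^(N+2)) * q^n := by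
            rw [show n+(N+1)+1 = (N+2)+n by omega, pow_add]
            ring
    calc (∑' n, fterm R α δ (n + (N+1))) ≤ ∑' n : ℕ, ((δ^2)⁻¹*K*q^(N+2)) * q^n :=
        Summable.tsum_le_tsum hle ((summable_nat_add_iff (N+1)).mpr hsum) hgsum
      _ = ((δ^2)⁻¹*K*q^(N+2)) * ∑' n : ℕ, q^n := tsum_mul_left
      _ = ((δ^2)⁻¹*K*q^(N+2)) * (1-q)⁻¹ := by rw [tsum_geometric_of_lt_one hq0.le hq1]
  have hqN : (δ^2)⁻¹ * q^(N+2) ≤ δ ^ (-2 * α) := by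
    have h1 : q^(N+1) = ((s^(N+1) : ℝ)) ^ ((1+(1-2*α)) : ℝ) := by
      rw [hqdef, rpow_nat_mul hR0, hsm (N+1), ← Real.rpow_mul hR0.le]
      congr 1; push_cast; ring
    have h2 : ((s^(N+1):ℝ)) ^ ((1+(1-2*α)):ℝ) ≤ δ ^ ((1+(1-2*α)):ℝ) :=
      Real.rpow_le_rpow (by positivity) hN1 (by linarith)
    have h3 : q^(N+2) ≤ q^(N+1) := pow_le_pow_of_le_one hq0.le hq1.le (by omega)
    have h4 : (δ^2)⁻¹ * δ ^ ((1+(1-2*α)):ℝ) = δ ^ (-2 * α) := by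
      rw [show (-2 * α:ℝ) = (1+(1-2*α)) - 2 by ring, Real.rpow_sub hδ0,
        show (2:ℝ) = ((2:ℕ):ℝ) by norm_num, Real.rpow_natCast]
      ring
    calc (δ^2)⁻¹ * q^(N+2) ≤ (δ^2)⁻¹ * q^(N+1) := by
          exact mul_le_mul_of_nonneg_left h3 (by positivity)
      _ ≤ (δ^2)⁻¹ * δ ^ ((1+(1-2*α)):ℝ) := by
          rw [h1]; exact mul_le_mul_of_nonneg_left h2 (by positivity)
      _ = δ ^ (-2 * α) := h4
  have h2q : (0:ℝ) < 1 - q := by linarith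
  have htail2 : (∑' n, fterm R α δ (n + (N+1))) ≤ K*(1-q)⁻¹ * δ ^ (-2 * α) := by
    refine htail.trans ?_
    rw [show ((δ^2)⁻¹*K*q^(N+2)) * (1-q)⁻¹ = ((δ^2)⁻¹*q^(N+2)) * (K * (1-q)⁻¹) by ring]
    calc ((δ^2)⁻¹*q^(N+2)) * (K * (1-q)⁻¹) ≤ δ ^ (-2 * α) * (K*(1-q)⁻¹) :=
        mul_le_mul_of_nonneg_right hqN (by positivity)
      _ = K*(1-q)⁻¹ * δ ^ (-2 * α) := mul_comm _ _
  have upper : (∑' n, fterm R α δ n) ≤ (x^2/(4*(x-1)) + K*(1-q)⁻¹) * δ ^ (-2 * α) := by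
    rw [← Summable.sum_add_tsum_nat_add (f := fterm R α δ) (N+1) hsum]
    calc (∑ n ∈ Finset.range (N+1), fterm R α δ n) + ∑' n, fterm R α δ (n + (N+1))
        ≤ x^2/(4*(x-1)) * δ ^ (-2 * α) + K*(1-q)⁻¹ * δ ^ (-2 * α) := add_le_add hhead htail2
      _ = (x^2/(4*(x-1)) + K*(1-q)⁻¹) * δ ^ (-2 * α) := by ring
  exact ⟨lower, upper⟩
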